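/- arXiv:1705.02374 — 4 statements merged into one kernel-verified Lean document; each statement's English description precedes it below -/
import Mathlib

section
/- Let Z_t = L⁰_t(ℝ^d) and suppose that for each t = 0,…,T−1 the control set Θ_t satisfies (c1), (c2) and: (i) the graph {(x,z) ∈ X_t × L⁰_t(ℝ^d) : z ∈ Θ_t(x)} is sequentially closed; (ii) for every sequence (x_n) in X_t with x_n → x ∈ X_t a.s. there exists M ∈ L⁰_{t,+} such that d_{L⁰_t(ℝ^d)}(z,0) ≤ M for all z ∈ ⋃_n Θ_t(x_n). Then Θ_t satisfies (c1)–(c4); in particular each Θ_t(x) is conditionally sequentially compact and the outer semi-continuity condition (c4) holds. -/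
open MeasureTheory Filter Topology Set
open scoped Classical

namespace CondPaper

variable {Ω : Type*}

/-- A countable partition of `Ω` (up to `μ`-null sets) into `G`-measurable sets. -/
def IsCondPartition {_ : MeasurableSpace Ω} (μ : Measure Ω) (G : MeasurableSpace Ω)
    (A : ℕ → Set Ω) : Prop :=
  (∀ k, MeasurableSet[G] (A k)) ∧
    (∀ i j, i ≠ j → μ (A i ∩ A j) = 0) ∧ μ (⋃ k, A k)ᶜ = 0

/-- A `G`-conditional metric on a nonempty set `X` (Definition 2.1 of the paper). -/
structure CondMetric {_ : MeasurableSpace Ω} (μ : Measure Ω) (G : MeasurableSpace Ω)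
    (X : Type*) : Type _ where
  d : X → X → Ω → ℝ
  measurable_d : ∀ x y, Measurable[G] (d x y)
  nonneg : ∀ x y, ∀ᵐ ω ∂μ, 0 ≤ d x y ω
  eq_iff : ∀ x y, (d x y =ᵐ[μ] fun _ => (0 : ℝ)) ↔ x = y
  symm : ∀ x y, d x y =ᵐ[μ] d y x
  triangle : ∀ x y z, ∀ᵐ ω ∂μ, d x z ω ≤ d x y ω + d y z ω
  concat_spec : ∀ (A : ℕ → Set Ω), IsCondPartition μ G A → ∀ x : ℕ → X,
    ∃! x₀ : X, ∀ k, ∀ᵐ ω ∂μ, ω ∈ A k → d x₀ (x k) ω = 0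

namespace CondMetric

variable {m : MeasurableSpace Ω} {μ : Measure Ω} {G : MeasurableSpace Ω} {X Z : Type*}

/-- The concatenation `Σₖ 1_{A k} (x k)` along a partition. -/
noncomputable def concat (D : CondMetric μ G X) (A : ℕ → Set Ω)
    (hA : IsCondPartition μ G A) (x : ℕ → X) : X :=
  (D.concat_spec A hA x).choose

/-- Almost sure convergence `x n → x₀` in a conditional metric space. -/
def TendstoAE (D : CondMetric μ G X) (x : ℕ → X) (x₀ : X) : Prop :=
  ∀ᵐ ω ∂μ, Tendsto (fun n => D.d x₀ (x n) ω) atTop (nhds (0 : ℝ))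

lemma isCondPartition_level {n : Ω → ℕ} (hn : Measurable[G] n) (μ : @Measure Ω m) :
    IsCondPartition μ G fun j => {ω | n ω = j} := by
  refine ⟨fun j => hn (MeasurableSet.singleton j), ?_, ?_⟩
  · intro i j hij
    have h : {ω | n ω = i} ∩ {ω | n ω = j} = (∅ : Set Ω) := by
      ext ω
      simp only [Set.mem_inter_iff, Set.mem_setOf_eq, Set.mem_empty_iff_false, iff_false]
      rintro ⟨h1, h2⟩
      exact hij (h1 ▸ h2 ▸ rfl)
    simp [h]
  · have h : (⋃ j, {ω | n ω = j}) = (Set.univ : Set Ω) := by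
      ext ω; simp
    simp [h]

/-- Given a `G`-measurable index `n : Ω → ℕ`, the element `x_{n}` of the
"measurable subsequence", i.e. the concatenation of `(x j)` along `({n = j})_j`. -/
noncomputable def subseq (D : CondMetric μ G X) (x : ℕ → X) (n : Ω → ℕ)
    (hn : Measurable[G] n) : X :=
  D.concat (fun j => {ω | n ω = j}) (isCondPartition_level hn μ) x

end CondMetric

variable {m : MeasurableSpace Ω} {μ : Measure Ω} {G : MeasurableSpace Ω} {X Z : Type*}

/-- A strictly increasing sequence `n₁ < n₂ < ⋯` of `G`-measurable `ℕ`-valued random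
variables (indexing a measurable subsequence). -/
structure MIdx {_ : MeasurableSpace Ω} (μ : Measure Ω) (G : MeasurableSpace Ω) where
  n : ℕ → Ω → ℕ
  meas : ∀ k, Measurable[G] (n k)
  lt : ∀ k, ∀ᵐ ω ∂μ, n k ω < n (k + 1) ω

/-- A `G`-stable subset: nonempty and closed under countable concatenations. -/
def StableSet (D : CondMetric μ G X) (H : Set X) : Prop :=
  H.Nonempty ∧ ∀ (A : ℕ → Set Ω) (hA : IsCondPartition μ G A) (x : ℕ → X),
    (∀ k, x k ∈ H) → D.concat A hA x ∈ H

/-- A sequentially closed subset of a conditional metric space. -/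
def SeqClosedSet (D : CondMetric μ G X) (H : Set X) : Prop :=
  ∀ (x : ℕ → X) (x₀ : X), (∀ k, x k ∈ H) → D.TendstoAE x x₀ → x₀ ∈ H

/-- Conditional sequential compactness: every sequence has a measurable
subsequence converging a.s. to an element of `K`. -/
def CondSeqCompact (D : CondMetric μ G X) (K : Set X) : Prop :=
  ∀ z : ℕ → X, (∀ k, z k ∈ K) →
    ∃ (N : MIdx μ G) (z₀ : X), z₀ ∈ K ∧
      D.TendstoAE (fun k => D.subseq z (N.n k) (N.meas k)) z₀

/-- Condition (c1): nonempty control sets. -/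
def ControlC1 (Θ : X → Set Z) : Prop := ∀ x, (Θ x).Nonempty

/-- Condition (c2): `𝓕ₜ`-stability of the state-dependent control set. -/
def ControlC2 (DX : CondMetric μ G X) (DZ : CondMetric μ G Z) (Θ : X → Set Z) : Prop :=
  ∀ (A : ℕ → Set Ω) (hA : IsCondPartition μ G A) (x : ℕ → X),
    Θ (DX.concat A hA x) =
      {w | ∃ z : ℕ → Z, (∀ k, z k ∈ Θ (x k)) ∧ w = DZ.concat A hA z}

/-- Condition (c3): conditional sequential compactness of each control set. -/
def ControlC3 (DZ : CondMetric μ G Z) (Θ : X → Set Z) : Prop :=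
  ∀ x, CondSeqCompact DZ (Θ x)

/-- Condition (c4): conditional outer semi-continuity of the control set. -/
def ControlC4 (DX : CondMetric μ G X) (DZ : CondMetric μ G Z) (Θ : X → Set Z) : Prop :=
  ∀ (x : ℕ → X) (x₀ : X), DX.TendstoAE x x₀ → ∀ z : ℕ → Z, (∀ n, z n ∈ Θ (x n)) →
    ∃ (N : MIdx μ G) (z' : ℕ → Z), (∀ k, z' k ∈ Θ x₀) ∧
      ∀ᵐ ω ∂μ, Tendsto
        (fun k => DZ.d (DZ.subseq z (N.n k) (N.meas k)) (z' k) ω) atTop (nhds (0 : ℝ))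

/-- Membership in `L̲⁰(G)`: a `G`-measurable random variable with values in `ℝ ∪ {-∞}`. -/
def InLbar {_ : MeasurableSpace Ω} (μ : Measure Ω) (G : MeasurableSpace Ω)
    (y : Ω → EReal) : Prop :=
  Measurable[G] y ∧ ∀ᵐ ω ∂μ, y ω < ⊤

end CondPaper

namespace CondPaper

section Aux

variable {Ω : Type*}

/-- Measurability of a `dite`-`Nat.find` construction. -/
lemma measurable_dite_find {mΩ : MeasurableSpace Ω} {P : ℕ → Ω → Prop}
    (hP : ∀ n, MeasurableSet {ω | P n ω}) {g : Ω → ℕ} (hg : Measurable g) :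
    Measurable fun ω => if h : ∃ n, P n ω then Nat.find h else g ω := by
  apply measurable_to_countable'
  intro n₀
  have hset : (fun ω => if h : ∃ n, P n ω then Nat.find h else g ω) ⁻¹' {n₀} =
      ({ω | P n₀ ω} ∩ ⋂ i, ⋂ _ : i < n₀, {ω | P i ω}ᶜ) ∪
        ((⋂ i, {ω | P i ω}ᶜ) ∩ {ω | g ω = n₀}) := by
    ext ω
    simp only [Set.mem_preimage, Set.mem_singleton_iff, Set.mem_union, Set.mem_inter_iff,
      Set.mem_iInter, Set.mem_compl_iff, Set.mem_setOf_eq]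
    constructor
    · intro hω
      by_cases h : ∃ n, P n ω
      · rw [dif_pos h] at hω
        subst hω
        exact Or.inl ⟨Nat.find_spec h, fun i hi => Nat.find_min h hi⟩
      · rw [dif_neg h] at hω
        push_neg at h
        exact Or.inr ⟨h, hω⟩
    · rintro (⟨h1, h2⟩ | ⟨h1, h2⟩)
      · have h : ∃ n, P n ω := ⟨n₀, h1⟩
        rw [dif_pos h]
        exact (Nat.find_eq_iff h).2 ⟨h1, fun i hi => h2 i hi⟩
      · rw [dif_neg (by push_neg; exact h1)]
        exact h2
  rw [hset]
  refine MeasurableSet.union ?_ ?_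
  · exact (hP n₀).inter (MeasurableSet.iInter fun i => MeasurableSet.iInter fun _ => (hP i).compl)
  · exact (MeasurableSet.iInter fun i => (hP i).compl).inter (hg (MeasurableSet.singleton n₀))

/-- Composition along a measurable `ℕ`-valued index. -/
lemma measurable_comp_nat {mΩ : MeasurableSpace Ω} {E : Type*} [MeasurableSpace E]
    {f : ℕ → Ω → E} (hf : ∀ n, Measurable (f n)) {n : Ω → ℕ} (hn : Measurable n) :
    Measurable fun ω => f (n ω) ω := by
  have h : Measurable fun p : Ω × ℕ => f p.2 p.1 :=
    measurable_from_prod_countable_left fun n => hf n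
  exact h.comp (measurable_id.prodMk hn)

lemma infinite_iff_forall_exists_le {S : Set ℕ} :
    S.Infinite ↔ ∀ N, ∃ n, N ≤ n ∧ n ∈ S := by
  constructor
  · intro h N
    by_contra hc
    push_neg at hc
    exact h ((Set.finite_lt_nat N).subset fun n hn => lt_of_not_ge fun hle => hc n hle hn)
  · intro h
    by_contra hcon
    rw [Set.not_infinite] at hcon
    have hfin := hcon
    obtain ⟨b, hb⟩ := hfin.bddAbove
    obtain ⟨n, hn1, hn2⟩ := h (b + 1)
    exact absurd (hb hn2) (by omega)



section Construction

variable {E : Type*} [PseudoMetricSpace E]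

/-- Greedy choice of centers of balls of radius `2⁻¹ ^ j` containing infinitely many
points of the sequence, among a countable dense family `q`. -/
noncomputable def pickC (z : ℕ → Ω → E) (q : ℕ → E) : ℕ → Ω → ℕ
  | j => fun ω =>
    if h : ∃ i, {n : ℕ | (∀ l, (_ : l < j) → dist (z n ω) (q (pickC z q l ω)) < (2:ℝ)⁻¹ ^ l)
        ∧ dist (z n ω) (q i) < (2:ℝ)⁻¹ ^ j}.Infinite
    then Nat.find h else 0

/-- The set of indices surviving all the constraints up to level `j`. -/
def levelSet (z : ℕ → Ω → E) (q : ℕ → E) (j : ℕ) (ω : Ω) : Set ℕ :=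
  {n : ℕ | ∀ l, l < j → dist (z n ω) (q (pickC z q l ω)) < (2:ℝ)⁻¹ ^ l}

/-- The choice predicate at level `j` for center index `i`. -/
def QQ (z : ℕ → Ω → E) (q : ℕ → E) (j i : ℕ) (ω : Ω) : Prop :=
  {n : ℕ | n ∈ levelSet z q j ω ∧ dist (z n ω) (q i) < (2:ℝ)⁻¹ ^ j}.Infinite

lemma pickC_eq (z : ℕ → Ω → E) (q : ℕ → E) (j : ℕ) (ω : Ω) :
    pickC z q j ω = if h : ∃ i, QQ z q j i ω then Nat.find h else 0 := by
  rw [pickC]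
  rfl

lemma levelSet_succ (z : ℕ → Ω → E) (q : ℕ → E) (j : ℕ) (ω : Ω) :
    levelSet z q (j + 1) ω =
      {n : ℕ | n ∈ levelSet z q j ω ∧ dist (z n ω) (q (pickC z q j ω)) < (2:ℝ)⁻¹ ^ j} := by
  ext n
  simp only [levelSet, Set.mem_setOf_eq, Nat.lt_succ_iff_lt_or_eq]
  constructor
  · intro h
    exact ⟨fun l hl => h l (Or.inl hl), h j (Or.inr rfl)⟩
  · rintro ⟨h1, h2⟩ l hl
    rcases hl with hl | rfl
    · exact h1 l hl
    · exact h2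

lemma levelSet_antitone (z : ℕ → Ω → E) (q : ℕ → E) {j k : ℕ} (h : j ≤ k) (ω : Ω) :
    levelSet z q k ω ⊆ levelSet z q j ω := fun n hn l hl => hn l (lt_of_lt_of_le hl h)

lemma pick_specQ {z : ℕ → Ω → E} {q : ℕ → E} {j : ℕ} {ω : Ω} (h : ∃ i, QQ z q j i ω) :
    QQ z q j (pickC z q j ω) ω := by
  rw [pickC_eq, dif_pos h]
  exact Nat.find_spec h

lemma pick_eq_zero {z : ℕ → Ω → E} {q : ℕ → E} {j : ℕ} {ω : Ω} (h : ¬∃ i, QQ z q j i ω) :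
    pickC z q j ω = 0 := by
  rw [pickC_eq, dif_neg h]

lemma levelSet_succ_infinite {z : ℕ → Ω → E} {q : ℕ → E} {j : ℕ} {ω : Ω}
    (h : ∃ i, QQ z q j i ω) : (levelSet z q (j + 1) ω).Infinite := by
  rw [levelSet_succ]
  exact pick_specQ h

lemma good_level_infinite {z : ℕ → Ω → E} {q : ℕ → E} {ω : Ω}
    (h : ∀ j, ∃ i, QQ z q j i ω) : ∀ j, (levelSet z q j ω).Infinite := by
  intro j
  induction j with
  | zero =>
    have : levelSet z q 0 ω = Set.univ := by
      ext n; simp [levelSet]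
    rw [this]
    exact Set.infinite_univ
  | succ j _ => exact levelSet_succ_infinite (h j)

lemma fail_succ {z : ℕ → Ω → E} {q : ℕ → E} {j : ℕ} {ω : Ω} (h : ¬∃ i, QQ z q j i ω) :
    ¬∃ i, QQ z q (j + 1) i ω := by
  rintro ⟨i, hi⟩
  apply h
  refine ⟨0, ?_⟩
  have hlev : (levelSet z q (j + 1) ω).Infinite := hi.mono fun n hn => hn.1
  rw [levelSet_succ, pick_eq_zero h] at hlev
  exact hlev

lemma fail_forever {z : ℕ → Ω → E} {q : ℕ → E} {j₀ : ℕ} {ω : Ω} (h : ¬∃ i, QQ z q j₀ i ω) :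
    ∀ j, j₀ ≤ j → pickC z q j ω = 0 := by
  have key : ∀ j, j₀ ≤ j → ¬∃ i, QQ z q j i ω := by
    intro j hj
    induction j, hj using Nat.le_induction with
    | base => exact h
    | succ j hj IH => exact fail_succ IH
  exact fun j hj => pick_eq_zero (key j hj)

lemma centersCauchy (z : ℕ → Ω → E) (q : ℕ → E) (ω : Ω) :
    CauchySeq fun j => q (pickC z q j ω) := by
  by_cases hg : ∀ j, ∃ i, QQ z q j i ω
  · apply cauchySeq_of_le_geometric (2:ℝ)⁻¹ 3 (by norm_num)
    intro j
    obtain ⟨n, hn⟩ := (good_level_infinite hg (j + 2)).nonempty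
    have d1 : dist (z n ω) (q (pickC z q j ω)) < (2:ℝ)⁻¹ ^ j := hn j (by omega)
    have d2 : dist (z n ω) (q (pickC z q (j+1) ω)) < (2:ℝ)⁻¹ ^ (j+1) := hn (j+1) (by omega)
    have hp : (0:ℝ) < (2:ℝ)⁻¹ ^ j := by positivity
    have := dist_triangle_left (q (pickC z q j ω)) (q (pickC z q (j+1) ω)) (z n ω)
    have hpow : (2:ℝ)⁻¹ ^ (j+1) ≤ (2:ℝ)⁻¹ ^ j := by
      apply pow_le_pow_of_le_one <;> norm_num
    calc dist (q (pickC z q j ω)) (q (pickC z q (j+1) ω))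
        ≤ dist (z n ω) (q (pickC z q j ω)) + dist (z n ω) (q (pickC z q (j+1) ω)) := this
      _ ≤ (2:ℝ)⁻¹ ^ j + (2:ℝ)⁻¹ ^ j := by linarith
      _ ≤ 3 * (2:ℝ)⁻¹ ^ j := by linarith
  · push_neg at hg
    obtain ⟨j₀, hj₀⟩ := hg
    have hfail : ¬∃ i, QQ z q j₀ i ω := by push_neg; exact hj₀
    have hconst : ∀ j ≥ j₀, q (pickC z q j ω) = q (pickC z q j₀ ω) := by
      intro j hj
      rw [fail_forever hfail j hj, fail_forever hfail j₀ le_rfl]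
    exact (tendsto_atTop_of_eventually_const hconst).cauchySeq


section Meas

variable {G : MeasurableSpace Ω} [MeasurableSpace E] [OpensMeasurableSpace E]
  [SecondCountableTopology E]

lemma pick_meas {z : ℕ → Ω → E} (hz : ∀ n, Measurable[G] (z n)) (q : ℕ → E) :
    ∀ j, Measurable[G] (pickC z q j) := by
  intro j
  induction j using Nat.strong_induction_on with
  | _ j IH =>
    have hlevel : ∀ n, MeasurableSet[G] {ω | n ∈ levelSet z q j ω} := by
      intro n
      have hs : {ω | n ∈ levelSet z q j ω} =
          ⋂ l, ⋂ _ : l < j, {ω | dist (z n ω) (q (pickC z q l ω)) < (2:ℝ)⁻¹ ^ l} := by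
        ext ω; simp [levelSet]
      rw [hs]
      exact MeasurableSet.iInter fun l => MeasurableSet.iInter fun hl =>
        measurableSet_lt ((hz n).dist (measurable_from_top.comp (IH l hl))) measurable_const
    have hQ : ∀ i, MeasurableSet[G] {ω | QQ z q j i ω} := by
      intro i
      have hs : {ω | QQ z q j i ω} = ⋂ (N : ℕ), ⋃ (n : ℕ), ⋃ _ : N ≤ n,
          ({ω | n ∈ levelSet z q j ω} ∩ {ω | dist (z n ω) (q i) < (2:ℝ)⁻¹ ^ j}) := by
        ext ω
        simp only [Set.mem_setOf_eq, QQ, infinite_iff_forall_exists_le, Set.mem_iInter,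
          Set.mem_iUnion, Set.mem_inter_iff]
        constructor
        · intro h N
          obtain ⟨n, hn1, hn2⟩ := h N
          exact ⟨n, hn1, hn2.1, hn2.2⟩
        · intro h N
          obtain ⟨n, hn1, hn2, hn3⟩ := h N
          exact ⟨n, hn1, hn2, hn3⟩
      rw [hs]
      exact MeasurableSet.iInter fun N => MeasurableSet.iUnion fun n =>
        MeasurableSet.iUnion fun _ => (hlevel n).inter
          (measurableSet_lt ((hz n).dist measurable_const) measurable_const)
    have : (pickC z q j : Ω → ℕ) =
        fun ω => if h : ∃ i, QQ z q j i ω then Nat.find h else (fun _ => 0) ω :=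
      funext fun ω => pickC_eq z q j ω
    rw [this]
    exact measurable_dite_find (P := fun i ω => QQ z q j i ω) hQ measurable_const

lemma levelSet_meas {z : ℕ → Ω → E} (hz : ∀ n, Measurable[G] (z n)) (q : ℕ → E) (j n : ℕ) :
    MeasurableSet[G] {ω | n ∈ levelSet z q j ω} := by
  have hs : {ω | n ∈ levelSet z q j ω} =
      ⋂ l, ⋂ _ : l < j, {ω | dist (z n ω) (q (pickC z q l ω)) < (2:ℝ)⁻¹ ^ l} := by
    ext ω; simp [levelSet]
  rw [hs]
  exact MeasurableSet.iInter fun l => MeasurableSet.iInter fun hl =>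
    measurableSet_lt ((hz n).dist (measurable_from_top.comp (pick_meas hz q l))) measurable_const

end Meas

/-- The extracted measurable subsequence indices. -/
noncomputable def idxC (z : ℕ → Ω → E) (q : ℕ → E) : ℕ → Ω → ℕ
  | 0 => fun _ => 0
  | (k + 1) => fun ω =>
      if h : ∃ n, idxC z q k ω < n ∧ n ∈ levelSet z q (k + 1) ω then Nat.find h
      else idxC z q k ω + 1

lemma idx_lt (z : ℕ → Ω → E) (q : ℕ → E) (k : ℕ) (ω : Ω) :
    idxC z q k ω < idxC z q (k + 1) ω := by
  show idxC z q k ω < if h : ∃ n, idxC z q k ω < n ∧ n ∈ levelSet z q (k + 1) ω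
      then Nat.find h else idxC z q k ω + 1
  split
  · next h => exact (Nat.find_spec h).1
  · omega

lemma idx_le (z : ℕ → Ω → E) (q : ℕ → E) (k : ℕ) (ω : Ω) : k ≤ idxC z q k ω := by
  induction k with
  | zero => omega
  | succ k IH => have := idx_lt z q k ω; omega

lemma idx_meas {G : MeasurableSpace Ω} [MeasurableSpace E] [OpensMeasurableSpace E]
    [SecondCountableTopology E] {z : ℕ → Ω → E} (hz : ∀ n, Measurable[G] (z n)) (q : ℕ → E) :
    ∀ k, Measurable[G] (idxC z q k) := by
  intro k
  induction k with
  | zero => exact measurable_const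
  | succ k IH =>
    have hP : ∀ n, MeasurableSet[G] {ω | idxC z q k ω < n ∧ n ∈ levelSet z q (k + 1) ω} := by
      intro n
      exact (IH measurableSet_Iio).inter (levelSet_meas hz q (k + 1) n)
    have : (idxC z q (k + 1) : Ω → ℕ) = fun ω =>
        if h : ∃ n, idxC z q k ω < n ∧ n ∈ levelSet z q (k + 1) ω then Nat.find h
        else (fun ω => idxC z q k ω + 1) ω := rfl
    rw [this]
    have hm := measurable_dite_find (P := fun n ω => idxC z q k ω < n ∧ n ∈ levelSet z q (k + 1) ω)
      hP (IH.add_const 1)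
    convert hm using 1
    funext ω
    congr!

lemma idx_mem {z : ℕ → Ω → E} {q : ℕ → E} {ω : Ω} (hgood : ∀ j, ∃ i, QQ z q j i ω) (k : ℕ) :
    idxC z q (k + 1) ω ∈ levelSet z q (k + 1) ω := by
  have hinf := good_level_infinite hgood (k + 1)
  obtain ⟨n, hn1, hn2⟩ := infinite_iff_forall_exists_le.mp hinf (idxC z q k ω + 1)
  have hex : ∃ n, idxC z q k ω < n ∧ n ∈ levelSet z q (k + 1) ω := ⟨n, by omega, hn2⟩
  show (if h : ∃ n, idxC z q k ω < n ∧ n ∈ levelSet z q (k + 1) ω then Nat.find h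
      else idxC z q k ω + 1) ∈ levelSet z q (k + 1) ω
  rw [dif_pos hex]
  exact (Nat.find_spec hex).2

end Construction

section Analysis

variable {E : Type*} [NormedAddCommGroup E] [ProperSpace E]

lemma exists_Q_of_bounded {z : ℕ → Ω → E} {q : ℕ → E} (hq : DenseRange q) {ω : Ω} {M : ℝ}
    (hω : ∀ n, ‖z n ω‖ ≤ M) {j : ℕ} (hS : (levelSet z q j ω).Infinite) :
    ∃ i, QQ z q j i ω := by
  set S := levelSet z q j ω with hSdef
  have hS' : {n | n ∈ S}.Infinite := hS
  set e : ℕ → ℕ := Nat.nth (· ∈ S) with he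
  have hem : ∀ k, e k ∈ S := fun k => Nat.nth_mem_of_infinite hS' k
  have hes : StrictMono e := Nat.nth_strictMono hS'
  have hbd : ∀ k, z (e k) ω ∈ Metric.closedBall (0 : E) M := by
    intro k
    rw [Metric.mem_closedBall, dist_zero_right]
    exact hω (e k)
  obtain ⟨a, -, φ, hφ, hconv⟩ :=
    tendsto_subseq_of_bounded Metric.isBounded_closedBall hbd
  have hεpos : (0:ℝ) < (2:ℝ)⁻¹ ^ j / 2 := by positivity
  obtain ⟨i, hi⟩ := hq.exists_dist_lt a hεpos
  refine ⟨i, ?_⟩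
  have hev : ∀ᶠ k in atTop, dist (z (e (φ k)) ω) a < (2:ℝ)⁻¹ ^ j / 2 :=
    (Metric.tendsto_nhds.mp hconv) _ hεpos
  obtain ⟨K, hK⟩ := eventually_atTop.mp hev
  refine Set.infinite_of_injective_forall_mem (f := fun k : ℕ => e (φ (K + k))) ?_ ?_
  · have : StrictMono fun k : ℕ => e (φ (K + k)) :=
      (hes.comp hφ).comp fun a b h => by omega
    exact this.injective
  · intro k
    refine ⟨hem (φ (K + k)), ?_⟩
    have h1 := hK (K + k) (by omega)
    calc dist (z (e (φ (K + k))) ω) (q i)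
        ≤ dist (z (e (φ (K + k))) ω) a + dist a (q i) := dist_triangle _ _ _
      _ < (2:ℝ)⁻¹ ^ j / 2 + (2:ℝ)⁻¹ ^ j / 2 := by exact add_lt_add h1 hi
      _ = (2:ℝ)⁻¹ ^ j := by ring

lemma good_of_bounded {z : ℕ → Ω → E} {q : ℕ → E} (hq : DenseRange q) {ω : Ω} {M : ℝ}
    (hω : ∀ n, ‖z n ω‖ ≤ M) : ∀ j, ∃ i, QQ z q j i ω := by
  have key : ∀ j, (levelSet z q j ω).Infinite ∧ ∃ i, QQ z q j i ω := by
    intro j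
    induction j with
    | zero =>
      have h0 : levelSet z q 0 ω = Set.univ := by ext n; simp [levelSet]
      have hinf : (levelSet z q 0 ω).Infinite := by rw [h0]; exact Set.infinite_univ
      exact ⟨hinf, exists_Q_of_bounded hq hω hinf⟩
    | succ j IH =>
      have hinf := levelSet_succ_infinite IH.2
      exact ⟨hinf, exists_Q_of_bounded hq hω hinf⟩
  exact fun j => (key j).2

/-- The limit point of the centers. -/
noncomputable def limPt (z : ℕ → Ω → E) (q : ℕ → E) (ω : Ω) : E :=
  limUnder atTop fun j => q (pickC z q j ω)

lemma tendsto_centers (z : ℕ → Ω → E) (q : ℕ → E) (ω : Ω) :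
    Tendsto (fun j => q (pickC z q j ω)) atTop (𝓝 (limPt z q ω)) :=
  (centersCauchy z q ω).tendsto_limUnder

lemma conv_on_good {z : ℕ → Ω → E} {q : ℕ → E} {ω : Ω}
    (hgood : ∀ j, ∃ i, QQ z q j i ω) :
    Tendsto (fun k => z (idxC z q k ω) ω) atTop (𝓝 (limPt z q ω)) := by
  rw [Metric.tendsto_atTop]
  intro ε hε
  obtain ⟨j₂, hj₂⟩ := Metric.tendsto_atTop.mp (tendsto_centers z q ω) (ε / 2) (by linarith)
  obtain ⟨j₁, hj₁⟩ := exists_pow_lt_of_lt_one (show (0:ℝ) < ε / 2 by linarith)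
    (show (2:ℝ)⁻¹ < 1 by norm_num)
  refine ⟨max j₁ j₂ + 1, fun k hk => ?_⟩
  set j := max j₁ j₂
  obtain ⟨k', rfl⟩ : ∃ k', k = k' + 1 := ⟨k - 1, by omega⟩
  have hmem : idxC z q (k' + 1) ω ∈ levelSet z q (k' + 1) ω := idx_mem hgood k'
  have hmem' : idxC z q (k' + 1) ω ∈ levelSet z q (j + 1) ω :=
    levelSet_antitone z q (by omega) ω hmem
  have hd1 : dist (z (idxC z q (k' + 1) ω) ω) (q (pickC z q j ω)) < (2:ℝ)⁻¹ ^ j :=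
    hmem' j (by omega)
  have hd2 : dist (q (pickC z q j ω)) (limPt z q ω) < ε / 2 := hj₂ j (le_max_right _ _)
  have hpow : (2:ℝ)⁻¹ ^ j ≤ (2:ℝ)⁻¹ ^ j₁ := by
    apply pow_le_pow_of_le_one (by norm_num) (by norm_num) (le_max_left _ _)
  calc dist (z (idxC z q (k' + 1) ω) ω) (limPt z q ω)
      ≤ dist (z (idxC z q (k' + 1) ω) ω) (q (pickC z q j ω)) +
        dist (q (pickC z q j ω)) (limPt z q ω) := dist_triangle _ _ _
    _ < (2:ℝ)⁻¹ ^ j + ε / 2 := add_lt_add hd1 hd2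
    _ ≤ (2:ℝ)⁻¹ ^ j₁ + ε / 2 := by linarith
    _ ≤ ε / 2 + ε / 2 := by linarith
    _ = ε := by ring

end Analysis

/-- **Measurable subsequence extraction** for a.s. bounded sequences in `L⁰(ℝ^d)`. -/
lemma extract {m : MeasurableSpace Ω} {μ : Measure Ω} (G : MeasurableSpace Ω) (d : ℕ)
    (z : ℕ → Ω → EuclideanSpace ℝ (Fin d)) (hz : ∀ n, Measurable[G] (z n))
    (M : Ω → ℝ) (hb : ∀ᵐ ω ∂μ, ∀ n, ‖z n ω‖ ≤ M ω) :
    ∃ (nn : ℕ → Ω → ℕ) (z₀ : Ω → EuclideanSpace ℝ (Fin d)),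
      (∀ k, Measurable[G] (nn k)) ∧ (∀ k ω, nn k ω < nn (k + 1) ω) ∧
      Measurable[G] z₀ ∧
      ∀ᵐ ω ∂μ, Tendsto (fun k => dist (z (nn k ω) ω) (z₀ ω)) atTop (𝓝 (0 : ℝ)) := by
  obtain ⟨q, hq⟩ := TopologicalSpace.exists_dense_seq (EuclideanSpace ℝ (Fin d))
  refine ⟨idxC z q, limPt z q, idx_meas hz q, idx_lt z q, ?_, ?_⟩
  · exact measurable_of_tendsto_metrizable' atTop
      (fun j => measurable_from_top.comp (pick_meas hz q j))
      (tendsto_pi_nhds.mpr fun ω => tendsto_centers z q ω)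
  · filter_upwards [hb] with ω hω
    exact tendsto_iff_dist_tendsto_zero.mp (conv_on_good (good_of_bounded hq hω))

end Aux


section CondMetricAux

variable {Ω : Type*} {m : MeasurableSpace Ω} {μ : Measure Ω} {G : MeasurableSpace Ω} {X : Type*}

lemma CondMetric.d_self (D : CondMetric μ G X) (x : X) :
    D.d x x =ᵐ[μ] fun _ => (0 : ℝ) := (D.eq_iff x x).mpr rfl

lemma CondMetric.concat_prop (D : CondMetric μ G X) (A : ℕ → Set Ω)
    (hA : IsCondPartition μ G A) (x : ℕ → X) :
    ∀ k, ∀ᵐ ω ∂μ, ω ∈ A k → D.d (D.concat A hA x) (x k) ω = 0 :=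
  (D.concat_spec A hA x).choose_spec.1

lemma CondMetric.concat_const (D : CondMetric μ G X) (A : ℕ → Set Ω)
    (hA : IsCondPartition μ G A) (x : X) :
    D.concat A hA (fun _ => x) = x := by
  have hx : ∀ k, ∀ᵐ ω ∂μ, ω ∈ A k → D.d x ((fun _ => x) k) ω = 0 :=
    fun k => (D.d_self x).mono fun ω h _ => h
  exact ((D.concat_spec A hA fun _ => x).choose_spec.2 x hx).symm

lemma CondMetric.tendstoAE_const (D : CondMetric μ G X) (x : X) :
    D.TendstoAE (fun _ => x) x := by
  filter_upwards [D.d_self x] with ω h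
  have heq : (fun n : ℕ => D.d x ((fun _ => x) n) ω) = fun _ => (0 : ℝ) := funext fun _ => h
  rw [heq]
  exact tendsto_const_nhds

lemma CondMetric.subseq_d_eq (D : CondMetric μ G X) (x₀ : X) (x : ℕ → X) (n : Ω → ℕ)
    (hn : Measurable[G] n) :
    ∀ᵐ ω ∂μ, D.d x₀ (D.subseq x n hn) ω = D.d x₀ (x (n ω)) ω := by
  set y := D.subseq x n hn with hy
  have h1 : ∀ j, ∀ᵐ ω ∂μ, ω ∈ {ω | n ω = j} → D.d y (x j) ω = 0 :=
    D.concat_prop _ (CondMetric.isCondPartition_level hn μ) x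
  have key : ∀ j, ∀ᵐ ω ∂μ, ω ∈ {ω | n ω = j} → D.d x₀ y ω = D.d x₀ (x j) ω := by
    intro j
    filter_upwards [h1 j, D.triangle x₀ y (x j), D.triangle x₀ (x j) y, D.symm (x j) y]
      with ω hz ht1 ht2 hs hmem
    have h0 : D.d y (x j) ω = 0 := hz hmem
    have hs0 : D.d (x j) y ω = 0 := by rw [hs]; exact h0
    linarith
  filter_upwards [ae_all_iff.mpr key] with ω h
  exact h (n ω) rfl

end CondMetricAux

/-- **Proposition 3.1 (finite-dimensional compactness criterion).** Let `Zₜ = L⁰ₜ(ℝ^d)`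
and suppose the control set `Θ` satisfies (c1), (c2), has sequentially closed graph (i),
and is locally `L⁰`-bounded along a.s. convergent sequences (ii). Then `Θ` satisfies
(c1)–(c4); in particular each `Θ x` is conditionally sequentially compact (c3) and
conditionally outer semi-continuous (c4). Elements of `L⁰ₜ(ℝ^d)` are represented by
`𝓕ₜ`-measurable functions `Ω → ℝ^d`, measurable subsequences by `𝓕ₜ`-measurable index
sequences `n₁ < n₂ < ⋯`, i.e. `z_{n k}(ω) = z (n k ω) ω`. -/
theorem finite_dim_control_compactness {Ω : Type*} {m : MeasurableSpace Ω}
    {μ : Measure Ω} [IsProbabilityMeasure μ] {G : MeasurableSpace Ω} (hG : G ≤ m)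
    {X : Type*} (DX : CondMetric μ G X) (d : ℕ)
    (Θ : X → Set (Ω → EuclideanSpace ℝ (Fin d)))
    -- Θ x ⊆ L⁰ₜ(ℝ^d)
    (hΘmeas : ∀ x, ∀ z ∈ Θ x, Measurable[G] z)
    -- (c1): nonemptiness
    (hc1 : ∀ x, (Θ x).Nonempty)
    -- (c2): 𝓕ₜ-stability
    (hc2 : ∀ (A : ℕ → Set Ω) (hA : IsCondPartition μ G A) (xk : ℕ → X),
      Θ (DX.concat A hA xk) = {z | Measurable[G] z ∧
        ∃ zk : ℕ → Ω → EuclideanSpace ℝ (Fin d), (∀ k, zk k ∈ Θ (xk k)) ∧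
          ∀ k, ∀ᵐ ω ∂μ, ω ∈ A k → z ω = zk k ω})
    -- (i): the graph of Θ is sequentially closed
    (hgraph : ∀ (xk : ℕ → X) (x₀ : X), DX.TendstoAE xk x₀ →
      ∀ zk : ℕ → Ω → EuclideanSpace ℝ (Fin d), (∀ k, zk k ∈ Θ (xk k)) →
      ∀ z₀ : Ω → EuclideanSpace ℝ (Fin d), Measurable[G] z₀ →
      (∀ᵐ ω ∂μ, Filter.Tendsto (fun k => zk k ω) Filter.atTop (nhds (z₀ ω))) →
      z₀ ∈ Θ x₀)
    -- (ii): local boundedness along a.s. convergent sequences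
    (hbdd : ∀ (xk : ℕ → X) (x₀ : X), DX.TendstoAE xk x₀ →
      ∃ M : Ω → ℝ, Measurable[G] M ∧ (∀ᵐ ω ∂μ, 0 ≤ M ω) ∧
        ∀ z : Ω → EuclideanSpace ℝ (Fin d), (∃ n, z ∈ Θ (xk n)) →
          ∀ᵐ ω ∂μ, ‖z ω‖ ≤ M ω) :
    -- (c1) and (c2) continue to hold, and moreover:
    (∀ x, (Θ x).Nonempty) ∧
    -- (c3): each Θ x is conditionally sequentially compact
    (∀ x, ∀ zk : ℕ → Ω → EuclideanSpace ℝ (Fin d), (∀ n, zk n ∈ Θ x) →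
      ∃ (N : MIdx μ G) (z₀ : Ω → EuclideanSpace ℝ (Fin d)), z₀ ∈ Θ x ∧
        ∀ᵐ ω ∂μ, Filter.Tendsto (fun k => dist (zk (N.n k ω) ω) (z₀ ω))
          Filter.atTop (nhds (0 : ℝ))) ∧
    -- (c4): conditional outer semi-continuity
    (∀ (xk : ℕ → X) (x₀ : X), DX.TendstoAE xk x₀ →
      ∀ zk : ℕ → Ω → EuclideanSpace ℝ (Fin d), (∀ n, zk n ∈ Θ (xk n)) →
      ∃ (N : MIdx μ G) (z' : ℕ → Ω → EuclideanSpace ℝ (Fin d)),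
        (∀ k, z' k ∈ Θ x₀) ∧
        ∀ᵐ ω ∂μ, Filter.Tendsto (fun k => dist (zk (N.n k ω) ω) (z' k ω))
          Filter.atTop (nhds (0 : ℝ))) := by
  refine ⟨hc1, ?_, ?_⟩
  · -- (c3): conditional sequential compactness of each `Θ x`
    intro x zk hzk
    have htx : DX.TendstoAE (fun _ => x) x := DX.tendstoAE_const x
    obtain ⟨M, hMmeas, hM0, hMb⟩ := hbdd (fun _ => x) x htx
    have hzmeas : ∀ n, Measurable[G] (zk n) := fun n => hΘmeas x (zk n) (hzk n)
    have hball : ∀ᵐ ω ∂μ, ∀ n, ‖zk n ω‖ ≤ M ω :=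
      ae_all_iff.mpr fun n => hMb (zk n) ⟨n, hzk n⟩
    obtain ⟨nn, z₀, hnm, hnlt, hz₀m, hcv⟩ := extract G d zk hzmeas M hball
    set w : ℕ → Ω → EuclideanSpace ℝ (Fin d) := fun k ω => zk (nn k ω) ω with hwdef
    have hw : ∀ k, w k ∈ Θ x := by
      intro k
      have heq := hc2 (fun j => {ω | nn k ω = j})
        (CondMetric.isCondPartition_level (hnm k) μ) (fun _ => x)
      rw [DX.concat_const] at heq
      rw [heq]
      refine ⟨measurable_comp_nat hzmeas (hnm k), zk, hzk, fun j => Eventually.of_forall ?_⟩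
      intro ω hj
      simp only [Set.mem_setOf_eq] at hj
      simp only [hwdef, hj]
    have hz₀Θ : z₀ ∈ Θ x := by
      apply hgraph (fun _ => x) x htx w hw z₀ hz₀m
      filter_upwards [hcv] with ω h
      exact tendsto_iff_dist_tendsto_zero.mpr h
    exact ⟨⟨nn, hnm, fun k => Eventually.of_forall (hnlt k)⟩, z₀, hz₀Θ, hcv⟩
  · -- (c4): conditional outer semi-continuity
    intro xk x₀ hconvx zk hzk
    obtain ⟨M, hMmeas, hM0, hMb⟩ := hbdd xk x₀ hconvx
    have hzmeas : ∀ n, Measurable[G] (zk n) := fun n => hΘmeas (xk n) (zk n) (hzk n)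
    have hball : ∀ᵐ ω ∂μ, ∀ n, ‖zk n ω‖ ≤ M ω :=
      ae_all_iff.mpr fun n => hMb (zk n) ⟨n, hzk n⟩
    obtain ⟨nn, z₀, hnm, hnlt, hz₀m, hcv⟩ := extract G d zk hzmeas M hball
    set yk : ℕ → X := fun k => DX.subseq xk (nn k) (hnm k) with hykdef
    set w : ℕ → Ω → EuclideanSpace ℝ (Fin d) := fun k ω => zk (nn k ω) ω with hwdef
    have hw : ∀ k, w k ∈ Θ (yk k) := by
      intro k
      have heq := hc2 (fun j => {ω | nn k ω = j})
        (CondMetric.isCondPartition_level (hnm k) μ) xk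
      rw [show yk k = DX.concat (fun j => {ω | nn k ω = j})
        (CondMetric.isCondPartition_level (hnm k) μ) xk from rfl, heq]
      refine ⟨measurable_comp_nat hzmeas (hnm k), zk, hzk, fun j => Eventually.of_forall ?_⟩
      intro ω hj
      simp only [Set.mem_setOf_eq] at hj
      simp only [hwdef, hj]
    have hklenn : ∀ k ω, k ≤ nn k ω := by
      intro k ω
      induction k with
      | zero => omega
      | succ k IH => have := hnlt k ω; omega
    have hyconv : DX.TendstoAE yk x₀ := by
      have hsub : ∀ k, ∀ᵐ ω ∂μ, DX.d x₀ (yk k) ω = DX.d x₀ (xk (nn k ω)) ω :=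
        fun k => DX.subseq_d_eq x₀ xk (nn k) (hnm k)
      filter_upwards [ae_all_iff.mpr hsub, hconvx] with ω h1 h3
      have hnt : Tendsto (fun k => nn k ω) atTop atTop :=
        tendsto_atTop_mono (fun k => hklenn k ω) tendsto_id
      have h4 : Tendsto (fun k => DX.d x₀ (xk (nn k ω)) ω) atTop (nhds 0) := h3.comp hnt
      have heq2 : (fun k => DX.d x₀ (yk k) ω) = fun k => DX.d x₀ (xk (nn k ω)) ω :=
        funext h1
      rw [CondMetric.TendstoAE] at *
      rw [heq2]
      exact h4
    have hz₀Θ : z₀ ∈ Θ x₀ := by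
      apply hgraph yk x₀ hyconv w hw z₀ hz₀m
      filter_upwards [hcv] with ω h
      exact tendsto_iff_dist_tendsto_zero.mpr h
    exact ⟨⟨nn, hnm, fun k => Eventually.of_forall (hnlt k)⟩, fun _ => z₀, fun _ => hz₀Θ, hcv⟩


end CondPaper
end

section
/- Let S : Ω ⇉ E be a closed-valued, nonempty-valued Effros measurable mapping and let X ⊆ L⁰(E) be a stable and sequentially closed set. Then there exist closed-valued, nonempty-valued Effros measurable mappings S_X : Ω ⇉ E and S_{X_S} : Ω ⇉ E such that the set of measurable selections of S_X equals X (i.e. X_{S_X} = X) and S_{X_S}(ω) = S(ω) for almost all ω (i.e. S = S_{X_S}). In particular, X ⊆ L⁰(E) is the set of measurable selections of some closed-valued Effros measurable mapping if and only if X is stable and sequentially closed. -/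
/-!
A closed-valued Effros measurable map is determined a.s. by a Castaing representation, i.e. by
countably many measurable selections whose values are dense in `S ω`; these are produced by the
Kuratowski–Ryll-Nardzewski construction (pick dense points ever closer to `S ω` and pass to the
limit). In the other direction, for a stable set `X` and a ball `K`, countable concatenation
together with the finiteness of `μ` yields an element `g_K ∈ X` that hits `K` a.s. whenever some
element of `X` does. Closing up the values of the countably many `g_K` over a countable base of
balls gives `S_X`: every `x ∈ X` lands in it by maximality, and every selection of `S_X` is an
a.s. limit of concatenations of the `g_K`, hence lies in `X` by sequential closedness.
-/

open MeasureTheory Filter Topology Set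

namespace RandomSetPaper

variable {Ω E : Type*}

/-- Effros measurability of a set-valued mapping `S : Ω ⇉ E`. -/
def EffrosMeasurable [MeasurableSpace Ω] [TopologicalSpace E] (S : Ω → Set E) : Prop :=
  ∀ O : Set E, IsOpen O → MeasurableSet {ω | (S ω ∩ O).Nonempty}

/-- The set of (a.e. classes of) measurable selections of `S`. -/
def Selections [MeasurableSpace Ω] [MeasurableSpace E] (μ : Measure Ω)
    (S : Ω → Set E) : Set (Ω → E) :=
  {f | Measurable f ∧ ∀ᵐ ω ∂μ, f ω ∈ S ω}

/-- A countable measurable partition of `Ω`, up to `μ`-null sets. -/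
def IsPartitionAE [MeasurableSpace Ω] (μ : Measure Ω) (A : ℕ → Set Ω) : Prop :=
  (∀ k, MeasurableSet (A k)) ∧ (∀ i j, i ≠ j → μ (A i ∩ A j) = 0) ∧ μ (⋃ k, A k)ᶜ = 0

/-- `f` is (a version of) the concatenation `Σₖ 1_{Aₖ} zₖ` of the sequence `z` along the
partition `A`, i.e. `f = z k` a.e. on `A k` for every `k`. -/
def IsConcatAE [MeasurableSpace Ω] (μ : Measure Ω) (A : ℕ → Set Ω)
    (z : ℕ → Ω → E) (f : Ω → E) : Prop :=
  ∀ k, ∀ᵐ ω ∂μ, ω ∈ A k → f ω = z k ω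

/-- A stable subset of `L⁰(E)` (identified with a μ-a.e.-saturated set of measurable
functions): nonempty and closed under countable concatenations along measurable
partitions. -/
def StableFnSet [MeasurableSpace Ω] [MeasurableSpace E] (μ : Measure Ω)
    (X : Set (Ω → E)) : Prop :=
  X.Nonempty ∧ ∀ (A : ℕ → Set Ω), IsPartitionAE μ A → ∀ z : ℕ → Ω → E,
    (∀ k, z k ∈ X) → ∀ f : Ω → E, Measurable f → IsConcatAE μ A z f → f ∈ X

/-- A sequentially closed subset of `L⁰(E)`: closed under a.s. limits. -/
def SeqClosedFnSet [MeasurableSpace Ω] [MeasurableSpace E] [TopologicalSpace E]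
    (μ : Measure Ω) (X : Set (Ω → E)) : Prop :=
  ∀ x : ℕ → Ω → E, (∀ n, x n ∈ X) → ∀ f : Ω → E, Measurable f →
    (∀ᵐ ω ∂μ, Tendsto (fun n => x n ω) atTop (nhds (f ω))) → f ∈ X

end RandomSetPaper

open Metric

namespace RandomSetPaper

section

variable {Ω E : Type*} [MeasurableSpace Ω]

section Selection

variable [MetricSpace E]

theorem EffrosMeasurable.measurableSet_infDist_lt {S : Ω → Set E} (hS : EffrosMeasurable S)
    (hne : ∀ ω, (S ω).Nonempty) (e : E) (r : ℝ) :
    MeasurableSet {ω | infDist e (S ω) < r} := by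
  convert hS (ball e r) isOpen_ball using 1
  ext ω
  simp only [mem_ofPred_eq, infDist_lt_iff (hne ω), Set.Nonempty, mem_inter_iff, mem_ball,
    dist_comm e]

variable [MeasurableSpace E] [TopologicalSpace.SeparableSpace E] [Nonempty E]
  {S : Ω → Set E}

theorem EffrosMeasurable.exists_measurable_infDist_lt (hS : EffrosMeasurable S)
    (hne : ∀ ω, (S ω).Nonempty) {r : ℝ} (hr : 0 < r) :
    ∃ x : Ω → E, Measurable x ∧ ∀ ω, infDist (x ω) (S ω) < r := by
  classical
  obtain ⟨u, hu⟩ := TopologicalSpace.exists_dense_seq E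
  have hex : ∀ ω, ∃ i, infDist (u i) (S ω) < r := fun ω => by
    obtain ⟨s, hs⟩ := hne ω
    obtain ⟨i, hi⟩ := denseRange_iff.1 hu s r hr
    exact ⟨i, (infDist_le_dist_of_mem hs).trans_lt (by rwa [dist_comm])⟩
  exact ⟨_, Measurable.find (fun i => measurable_const)
    (fun i => hS.measurableSet_infDist_lt hne _ _) hex, fun ω => Nat.find_spec (hex ω)⟩

theorem EffrosMeasurable.exists_measurable_infDist_lt_of_infDist_lt [OpensMeasurableSpace E]
    (hS : EffrosMeasurable S) (hne : ∀ ω, (S ω).Nonempty) {x : Ω → E} (hx : Measurable x)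
    {r ρ : ℝ} (hρ : 0 < ρ) (hxS : ∀ ω, infDist (x ω) (S ω) < r) :
    ∃ y : Ω → E, Measurable y ∧ ∀ ω, infDist (y ω) (S ω) < ρ ∧ dist (y ω) (x ω) < r + ρ := by
  classical
  obtain ⟨u, hu⟩ := TopologicalSpace.exists_dense_seq E
  have hex : ∀ ω, ∃ i, infDist (u i) (S ω) < ρ ∧ dist (u i) (x ω) < r + ρ := fun ω => by
    obtain ⟨s, hs, hxs⟩ := (infDist_lt_iff (hne ω)).1 (hxS ω)
    obtain ⟨i, hi⟩ := denseRange_iff.1 hu s ρ hρ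
    refine ⟨i, (infDist_le_dist_of_mem hs).trans_lt (by rwa [dist_comm]), ?_⟩
    calc dist (u i) (x ω) ≤ dist (u i) s + dist (x ω) s := dist_triangle_right _ _ _
      _ < r + ρ := by rw [dist_comm (u i)]; linarith
  refine ⟨_, Measurable.find (fun i => measurable_const) (fun i => ?_) hex,
    fun ω => Nat.find_spec (hex ω)⟩
  exact (hS.measurableSet_infDist_lt hne _ _).inter
    (measurableSet_lt (measurable_const.dist hx) measurable_const)

variable [BorelSpace E] [CompleteSpace E]

theorem EffrosMeasurable.exists_measurable_mem_dist_le (hS : EffrosMeasurable S)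
    (hcl : ∀ ω, IsClosed (S ω)) (hne : ∀ ω, (S ω).Nonempty) {x : Ω → E} (hx : Measurable x)
    {r : ℝ} (hr : 0 < r) (hxS : ∀ ω, infDist (x ω) (S ω) < r) :
    ∃ g : Ω → E, Measurable g ∧ (∀ ω, g ω ∈ S ω) ∧ ∀ ω, dist (g ω) (x ω) ≤ 3 * r := by
  have step : ∀ (k : ℕ) (y : Ω → E), Measurable y ∧ (∀ ω, infDist (y ω) (S ω) < r / 2 ^ k) →
      ∃ y' : Ω → E, (Measurable y' ∧ ∀ ω, infDist (y' ω) (S ω) < r / 2 ^ (k + 1)) ∧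
        ∀ ω, dist (y' ω) (y ω) < r / 2 ^ k + r / 2 ^ (k + 1) := fun k y hy => by
    obtain ⟨y', hy'm, hy'⟩ := hS.exists_measurable_infDist_lt_of_infDist_lt hne hy.1
      (ρ := r / 2 ^ (k + 1)) (by positivity) hy.2
    exact ⟨y', ⟨hy'm, fun ω => (hy' ω).1⟩, fun ω => (hy' ω).2⟩
  choose! next hnext hnext_dist using step
  let y : ℕ → Ω → E := fun k => Nat.rec x next k
  have hy : ∀ k, Measurable (y k) ∧ ∀ ω, infDist (y k ω) (S ω) < r / 2 ^ k := fun k => by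
    induction k with
    | zero => simpa [y] using And.intro hx hxS
    | succ k ih => exact hnext k (y k) ih
  have hdist : ∀ ω k, dist (y k ω) (y (k + 1) ω) ≤ 3 * r / 2 / 2 ^ k := fun ω k => by
    rw [dist_comm]
    refine (hnext_dist k (y k) (hy k) ω).le.trans (le_of_eq ?_)
    rw [pow_succ]
    field_simp
    ring
  choose g hg using fun ω =>
    cauchySeq_tendsto_of_complete (cauchySeq_of_le_geometric_two (hdist ω))
  refine ⟨g, measurable_of_tendsto_metrizable (fun k => (hy k).1) (tendsto_pi_nhds.2 hg),
    fun ω => ?_, fun ω => ?_⟩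
  · have hlim : Tendsto (fun k => infDist (y k ω) (S ω)) atTop (𝓝 (infDist (g ω) (S ω))) :=
      ((continuous_infDist_pt (S ω)).tendsto (g ω)).comp (hg ω)
    have hr0 : Tendsto (fun k : ℕ => r / 2 ^ k) atTop (𝓝 0) :=
      tendsto_const_nhds.div_atTop (tendsto_pow_atTop_atTop_of_one_lt one_lt_two)
    rw [(hcl ω).mem_iff_infDist_zero (hne ω)]
    exact le_antisymm (le_of_tendsto_of_tendsto hlim hr0
      (Eventually.of_forall fun k => ((hy k).2 ω).le)) infDist_nonneg
  · rw [dist_comm]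
    exact dist_le_of_le_geometric_two_of_tendsto₀ (hdist ω) (hg ω)

theorem EffrosMeasurable.exists_measurable_mem_dist_le_of_infDist_lt (hS : EffrosMeasurable S)
    (hcl : ∀ ω, IsClosed (S ω)) (hne : ∀ ω, (S ω).Nonempty) (e : E) {r : ℝ} (hr : 0 < r) :
    ∃ g : Ω → E, Measurable g ∧ (∀ ω, g ω ∈ S ω) ∧
      ∀ ω, infDist e (S ω) < r → dist (g ω) e ≤ 3 * r := by
  classical
  obtain ⟨x₀, hx₀m, hx₀⟩ := hS.exists_measurable_infDist_lt hne hr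
  let A := {ω | infDist e (S ω) < r}
  have hA : MeasurableSet A := hS.measurableSet_infDist_lt hne e r
  obtain ⟨g, hgm, hgS, hg⟩ := hS.exists_measurable_mem_dist_le hcl hne
    ((measurable_const (a := e)).piecewise hA hx₀m) hr fun ω => by
      by_cases hω : ω ∈ A
      · rw [piecewise_eq_of_mem _ _ _ hω]
        exact hω
      · simp [hω, hx₀]
  exact ⟨g, hgm, hgS, fun ω hω => by simpa [A, hω] using hg ω⟩

theorem EffrosMeasurable.exists_castaing (hS : EffrosMeasurable S) (hcl : ∀ ω, IsClosed (S ω))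
    (hne : ∀ ω, (S ω).Nonempty) :
    ∃ g : ℕ × ℕ → Ω → E, (∀ p, Measurable (g p)) ∧ (∀ p ω, g p ω ∈ S ω) ∧
      ∀ ω, S ω = closure (range fun p => g p ω) := by
  obtain ⟨u, hu⟩ := TopologicalSpace.exists_dense_seq E
  choose g hgm hgS hg using fun p : ℕ × ℕ =>
    hS.exists_measurable_mem_dist_le_of_infDist_lt hcl hne (u p.1)
      (Nat.one_div_pos_of_nat (n := p.2))
  refine ⟨g, hgm, hgS, fun ω => subset_antisymm (fun s hs => ?_)
    (closure_minimal (range_subset_iff.2 fun p => hgS p ω) (hcl ω))⟩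
  refine Metric.mem_closure_iff.2 fun ε hε => ?_
  obtain ⟨n, hn⟩ := exists_nat_one_div_lt (by positivity : 0 < ε / 4)
  obtain ⟨i, hi⟩ := denseRange_iff.1 hu s _ (Nat.one_div_pos_of_nat (n := n))
  have hinf : infDist (u i) (S ω) < 1 / ((n : ℝ) + 1) :=
    (infDist_le_dist_of_mem hs).trans_lt (by rwa [dist_comm])
  refine ⟨g (i, n) ω, mem_range_self _, ?_⟩
  calc dist s (g (i, n) ω) ≤ dist s (u i) + dist (g (i, n) ω) (u i) := dist_triangle_right _ _ _
    _ ≤ 1 / ((n : ℝ) + 1) + 3 * (1 / ((n : ℝ) + 1)) := add_le_add hi.le (hg (i, n) ω hinf)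
    _ < ε := by linarith

theorem ae_subset_of_selections_subset {μ : Measure Ω} {S T : Ω → Set E}
    (hT : EffrosMeasurable T) (hTcl : ∀ ω, IsClosed (T ω)) (hTne : ∀ ω, (T ω).Nonempty)
    (hScl : ∀ ω, IsClosed (S ω)) (h : Selections μ T ⊆ Selections μ S) :
    ∀ᵐ ω ∂μ, T ω ⊆ S ω := by
  obtain ⟨g, hgm, hgT, hT_eq⟩ := hT.exists_castaing hTcl hTne
  filter_upwards [ae_all_iff.2 fun p => (h ⟨hgm p, .of_forall (hgT p)⟩).2] with ω hω
  rw [hT_eq ω]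
  exact closure_minimal (range_subset_iff.2 hω) (hScl ω)

theorem stableFnSet_selections {μ : Measure Ω} {T : Ω → Set E} (hT : EffrosMeasurable T)
    (hTcl : ∀ ω, IsClosed (T ω)) (hTne : ∀ ω, (T ω).Nonempty) :
    StableFnSet μ (Selections μ T) := by
  obtain ⟨g, hgm, hgT, -⟩ := hT.exists_castaing hTcl hTne
  refine ⟨⟨g 0, hgm 0, .of_forall (hgT 0)⟩, fun A hA z hz f hfm hf => ⟨hfm, ?_⟩⟩
  filter_upwards [measure_eq_zero_iff_ae_notMem.1 hA.2.2, ae_all_iff.2 hf,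
    ae_all_iff.2 fun k => (hz k).2] with ω hω hfω hzω
  obtain ⟨k, hk⟩ := mem_iUnion.1 (notMem_compl_iff.1 hω)
  rw [hfω k hk]
  exact hzω k

end Selection

theorem seqClosedFnSet_selections [TopologicalSpace E] [MeasurableSpace E] {μ : Measure Ω}
    {T : Ω → Set E} (hTcl : ∀ ω, IsClosed (T ω)) : SeqClosedFnSet μ (Selections μ T) :=
  fun x hx f hfm hlim => ⟨hfm, by
    filter_upwards [ae_all_iff.2 fun n => (hx n).2, hlim] with ω hxω hω
    exact (hTcl ω).mem_of_tendsto hω (.of_forall hxω)⟩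

theorem effrosMeasurable_closure_range [TopologicalSpace E] [MeasurableSpace E]
    [OpensMeasurableSpace E] {ι : Type*} [Countable ι] {g : ι → Ω → E}
    (hg : ∀ i, Measurable (g i)) : EffrosMeasurable fun ω => closure (range fun i => g i ω) :=
  fun O hO => by
    have hset : {ω | (closure (range fun i => g i ω) ∩ O).Nonempty} = ⋃ i, g i ⁻¹' O := by
      ext ω
      simp only [mem_ofPred_eq, closure_inter_open_nonempty_iff hO]
      simp [Set.Nonempty]
    rw [hset]
    exact .iUnion fun i => hg i hO.measurableSet

section Stable

variable [MeasurableSpace E] {μ : Measure Ω} {X : Set (Ω → E)}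

theorem StableFnSet.index_mem (hX : StableFnSet μ X) {z : ℕ → Ω → E} (hz : ∀ k, z k ∈ X)
    {idx : Ω → ℕ} (hidx : Measurable idx) (hm : Measurable fun ω => z (idx ω) ω) :
    (fun ω => z (idx ω) ω) ∈ X := by
  refine hX.2 (fun k => idx ⁻¹' {k}) ⟨fun k => hidx (measurableSet_singleton k),
    fun i j hij => ?_, ?_⟩ z hz _ hm fun k => .of_forall fun ω (hω : idx ω = k) => by rw [hω]
  · rw [← preimage_inter, singleton_inter_eq_empty.2 (mem_singleton_iff.not.2 hij),
      preimage_empty, measure_empty]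
  · rw [eq_univ_of_forall fun ω => mem_iUnion.2 ⟨idx ω, rfl⟩, compl_univ, measure_empty]

theorem StableFnSet.exists_mem_eq_of_mem (hX : StableFnSet μ X) (hXm : ∀ f ∈ X, Measurable f)
    {z : ℕ → Ω → E} (hz : ∀ k, z k ∈ X) {P : ℕ → Set Ω} (hP : ∀ k, MeasurableSet (P k)) :
    ∃ y ∈ X, ∀ ω k, ω ∈ P k → ∃ j, ω ∈ P j ∧ y ω = z j ω := by
  classical
  -- `Nat.find` picks the first `k` with `ω ∈ P k`, and `0` off `⋃ j, P j`.
  have hex : ∀ ω, ∃ k, ω ∈ P k ∨ ω ∉ ⋃ j, P j := fun ω => by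
    by_cases h : ω ∈ ⋃ j, P j
    · exact (mem_iUnion.1 h).imp fun k hk => Or.inl hk
    · exact ⟨0, Or.inr h⟩
  have hPm : ∀ k, MeasurableSet {ω | ω ∈ P k ∨ ω ∉ ⋃ j, P j} := fun k =>
    (hP k).union (MeasurableSet.iUnion hP).compl
  refine ⟨_, hX.index_mem hz (measurable_find hex hPm)
    (Measurable.find (fun k => hXm _ (hz k)) hPm hex), fun ω k hk => ⟨_, ?_, rfl⟩⟩
  exact (Nat.find_spec (hex ω)).resolve_right (not_not.2 (mem_iUnion.2 ⟨k, hk⟩))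

theorem StableFnSet.exists_mem_preimage_subset (hX : StableFnSet μ X)
    (hXm : ∀ f ∈ X, Measurable f) {z : ℕ → Ω → E} (hz : ∀ k, z k ∈ X) {K : Set E}
    (hK : MeasurableSet K) : ∃ y ∈ X, ∀ k, z k ⁻¹' K ⊆ y ⁻¹' K := by
  obtain ⟨y, hyX, hy⟩ := hX.exists_mem_eq_of_mem hXm hz fun k => hXm _ (hz k) hK
  refine ⟨y, hyX, fun k ω hω => ?_⟩
  obtain ⟨j, hj, hyj⟩ := hy ω k hω
  rw [mem_preimage, hyj]
  exact hj

theorem StableFnSet.exists_ae_maximal_preimage [IsFiniteMeasure μ] (hX : StableFnSet μ X)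
    (hXm : ∀ f ∈ X, Measurable f) {K : Set E} (hK : MeasurableSet K) :
    ∃ g ∈ X, ∀ x ∈ X, ∀ᵐ ω ∂μ, x ω ∈ K → g ω ∈ K := by
  classical
  let c := sSup ((fun x : Ω → E => μ (x ⁻¹' K)) '' X)
  obtain ⟨v, -, hvc, hvX⟩ := exists_seq_tendsto_sSup (S := (fun x : Ω → E => μ (x ⁻¹' K)) '' X)
    (hX.1.image _) (OrderTop.bddAbove _)
  choose xs hxsX hxs using hvX
  obtain ⟨g, hgX, hg⟩ := hX.exists_mem_preimage_subset hXm hxsX hK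
  have hcg : c ≤ μ (g ⁻¹' K) := le_of_tendsto' hvc fun m => hxs m ▸ measure_mono (hg m)
  refine ⟨g, hgX, fun x hx => ?_⟩
  obtain ⟨h, hhX, hh⟩ := hX.exists_mem_preimage_subset hXm
    (z := fun k => if k = 0 then x else g) (fun k => by split_ifs <;> assumption) hK
  have hxg : x ⁻¹' K ∪ g ⁻¹' K ⊆ h ⁻¹' K :=
    union_subset (by simpa using hh 0) (by simpa using hh 1)
  have hnull : μ (x ⁻¹' K \ g ⁻¹' K) = 0 := by
    rw [measure_sdiff' _ (hXm g hgX hK).nullMeasurableSet (measure_ne_top μ _),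
      tsub_eq_zero_iff_le]
    exact (measure_mono hxg).trans ((le_sSup (mem_image_of_mem _ hhX)).trans hcg)
  filter_upwards [measure_eq_zero_iff_ae_notMem.1 hnull] with ω hω hxω
  by_contra hgω
  exact hω ⟨hxω, hgω⟩

end Stable

section Representation

variable [MetricSpace E]

theorem mem_closure_range_of_mem_closedBall_imp {u : ℕ → E} (hu : DenseRange u) {x : E}
    {y : ℕ × ℕ → E} (h : ∀ p : ℕ × ℕ, x ∈ closedBall (u p.1) (1 / ((p.2 : ℝ) + 1)) →
      y p ∈ closedBall (u p.1) (1 / ((p.2 : ℝ) + 1))) :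
    x ∈ closure (range y) := by
  refine Metric.mem_closure_iff.2 fun ε hε => ?_
  obtain ⟨n, hn⟩ := exists_nat_one_div_lt (half_pos hε)
  obtain ⟨i, hi⟩ := denseRange_iff.1 hu x _ (Nat.one_div_pos_of_nat (n := n))
  refine ⟨y (i, n), mem_range_self _, ?_⟩
  calc dist x (y (i, n)) ≤ dist x (u i) + dist (y (i, n)) (u i) := dist_triangle_right _ _ _
    _ ≤ 1 / ((n : ℝ) + 1) + 1 / ((n : ℝ) + 1) :=
      add_le_add hi.le (h (i, n) (mem_closedBall.2 hi.le))
    _ < ε := by linarith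

theorem dist_le_of_mem_closure_range {ι : Type*} {y : ι → E} {x c w : E} {r : ℝ}
    (hx : x ∈ closure (range y)) (hxc : dist x c < r)
    (hy : ∀ i, dist (y i) c ≤ r → dist w c ≤ r) :
    dist w x ≤ 2 * r := by
  obtain ⟨_, hb, i, rfl⟩ := _root_.mem_closure_iff.1 hx (ball c r) isOpen_ball (mem_ball.2 hxc)
  calc dist w x ≤ dist w c + dist x c := dist_triangle_right _ _ _
    _ ≤ r + r := add_le_add (hy i (mem_ball.1 hb).le) hxc.le
    _ = 2 * r := by ring

variable [MeasurableSpace E] [BorelSpace E] [TopologicalSpace.SeparableSpace E] [Nonempty E]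
  {μ : Measure Ω} [IsFiniteMeasure μ] {X : Set (Ω → E)}

theorem StableFnSet.exists_selections_eq (hX : StableFnSet μ X) (hXseq : SeqClosedFnSet μ X)
    (hXm : ∀ f ∈ X, Measurable f) :
    ∃ SX : Ω → Set E, (∀ ω, IsClosed (SX ω)) ∧ (∀ ω, (SX ω).Nonempty) ∧
      EffrosMeasurable SX ∧ Selections μ SX = X := by
  obtain ⟨u, hu⟩ := TopologicalSpace.exists_dense_seq E
  choose g hgX hg using fun p : ℕ × ℕ => hX.exists_ae_maximal_preimage hXm
    (measurableSet_closedBall (x := u p.1) (ε := 1 / ((p.2 : ℝ) + 1)))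
  have hmax : ∀ x ∈ X, ∀ᵐ ω ∂μ, ∀ p : ℕ × ℕ, x ω ∈ closedBall (u p.1) (1 / ((p.2 : ℝ) + 1)) →
      g p ω ∈ closedBall (u p.1) (1 / ((p.2 : ℝ) + 1)) := fun x hx =>
    ae_all_iff.2 fun p => hg p x hx
  refine ⟨fun ω => closure (range fun p => g p ω), fun _ => isClosed_closure,
    fun ω => ⟨g 0 ω, subset_closure (mem_range_self 0)⟩,
    effrosMeasurable_closure_range fun p => hXm _ (hgX p),
    subset_antisymm ?_ fun x hx => ⟨hXm x hx, ?_⟩⟩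
  · rintro f ⟨hfm, hf⟩
    have approx : ∀ n : ℕ, ∃ y ∈ X, ∀ᵐ ω ∂μ, dist (y ω) (f ω) ≤ 2 * (1 / ((n : ℝ) + 1)) :=
      fun n => by
        obtain ⟨y, hyX, hy⟩ := hX.exists_mem_eq_of_mem hXm (fun i => hgX (i, n))
          fun i => hfm (measurableSet_ball (x := u i) (ε := 1 / ((n : ℝ) + 1)))
        refine ⟨y, hyX, ?_⟩
        filter_upwards [hf, ae_all_iff.2 fun p => hmax (g p) (hgX p)] with ω hfω hgω
        obtain ⟨i, hi⟩ := denseRange_iff.1 hu (f ω) _ (Nat.one_div_pos_of_nat (n := n))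
        obtain ⟨j, hj, hyj⟩ := hy ω i (mem_ball.2 hi)
        rw [hyj]
        exact dist_le_of_mem_closure_range hfω hj fun p hp => hgω p (j, n) hp
    choose y hyX hy using approx
    refine hXseq y hyX f hfm ?_
    filter_upwards [ae_all_iff.2 hy] with ω hω
    refine tendsto_iff_dist_tendsto_zero.2 (squeeze_zero (fun n => dist_nonneg) hω ?_)
    simpa using tendsto_one_div_add_atTop_nhds_zero_nat.const_mul (2 : ℝ)
  · filter_upwards [hmax x hx] with ω hω
    exact mem_closure_range_of_mem_closedBall_imp hu hω

end Representation

end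

theorem selections_correspondence_general {Ω E : Type*} [MeasurableSpace Ω]
    {μ : Measure Ω} [IsProbabilityMeasure μ]
    [MetricSpace E] [TopologicalSpace.SeparableSpace E] [CompleteSpace E]
    [MeasurableSpace E] [BorelSpace E]
    (S : Ω → Set E) (hSclosed : ∀ ω, IsClosed (S ω)) (hSne : ∀ ω, (S ω).Nonempty)
    (hSEffros : EffrosMeasurable S)
    (X : Set (Ω → E)) (hXmeas : ∀ f ∈ X, Measurable f)
    (hXstable : StableFnSet μ X) (hXseqclosed : SeqClosedFnSet μ X) :
    (∃ SX : Ω → Set E, (∀ ω, IsClosed (SX ω)) ∧ (∀ ω, (SX ω).Nonempty) ∧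
      EffrosMeasurable SX ∧ Selections μ SX = X) ∧
    (∀ T : Ω → Set E, (∀ ω, IsClosed (T ω)) → (∀ ω, (T ω).Nonempty) →
      EffrosMeasurable T → Selections μ T = Selections μ S → ∀ᵐ ω ∂μ, T ω = S ω) ∧
    (∀ Y : Set (Ω → E), (∀ f ∈ Y, Measurable f) →
      (∀ f ∈ Y, ∀ g : Ω → E, Measurable g → f =ᵐ[μ] g → g ∈ Y) →
      ((∃ T : Ω → Set E, (∀ ω, IsClosed (T ω)) ∧ (∀ ω, (T ω).Nonempty) ∧
          EffrosMeasurable T ∧ Selections μ T = Y) ↔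
        (StableFnSet μ Y ∧ SeqClosedFnSet μ Y))) := by
  have : Nonempty Ω := nonempty_of_isProbabilityMeasure μ
  have : Nonempty E := ⟨(hSne (Classical.arbitrary Ω)).some⟩
  refine ⟨hXstable.exists_selections_eq hXseqclosed hXmeas, fun T hTcl hTne hTE hTS => ?_,
    fun Y hYmeas _ => ⟨?_, fun hY => hY.1.exists_selections_eq hY.2 hYmeas⟩⟩
  · filter_upwards [ae_subset_of_selections_subset hTE hTcl hTne hSclosed hTS.le,
      ae_subset_of_selections_subset hSEffros hSclosed hSne hTcl hTS.ge] with ω h₁ h₂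
    exact h₁.antisymm h₂
  · rintro ⟨T, hTcl, hTne, hTE, rfl⟩
    exact ⟨stableFnSet_selections hTE hTcl hTne, seqClosedFnSet_selections hTcl⟩

/-- **Theorem 5.3 (correspondence between random sets and stable sequentially closed
sets).** Let `S : Ω ⇉ E` be closed-valued, nonempty-valued and Effros measurable, and let
`X ⊆ L⁰(E)` be stable and sequentially closed. Then (1) there is a closed-valued,
nonempty-valued Effros measurable `S_X` whose set of measurable selections is exactly `X`
(`X_{S_X} = X`); (2) any closed-valued, nonempty-valued Effros measurable mapping with the
same selections as `S` coincides a.s. with `S` (this is `S = S_{X_S}`); and (3) in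
particular, a set `Y ⊆ L⁰(E)` is the set of measurable selections of some closed-valued,
nonempty-valued Effros measurable mapping iff `Y` is stable and sequentially closed. -/
theorem selections_correspondence {Ω E : Type*} [MeasurableSpace Ω]
    {μ : Measure Ω} [IsProbabilityMeasure μ] [μ.IsComplete]
    [MetricSpace E] [TopologicalSpace.SeparableSpace E] [CompleteSpace E]
    [MeasurableSpace E] [BorelSpace E]
    (S : Ω → Set E) (hSclosed : ∀ ω, IsClosed (S ω)) (hSne : ∀ ω, (S ω).Nonempty)
    (hSEffros : EffrosMeasurable S)
    (X : Set (Ω → E)) (hXmeas : ∀ f ∈ X, Measurable f)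
    (hXsat : ∀ f ∈ X, ∀ g : Ω → E, Measurable g → f =ᵐ[μ] g → g ∈ X)
    (hXstable : StableFnSet μ X) (hXseqclosed : SeqClosedFnSet μ X) :
    (∃ SX : Ω → Set E, (∀ ω, IsClosed (SX ω)) ∧ (∀ ω, (SX ω).Nonempty) ∧
      EffrosMeasurable SX ∧ Selections μ SX = X) ∧
    (∀ T : Ω → Set E, (∀ ω, IsClosed (T ω)) → (∀ ω, (T ω).Nonempty) →
      EffrosMeasurable T → Selections μ T = Selections μ S → ∀ᵐ ω ∂μ, T ω = S ω) ∧
    (∀ Y : Set (Ω → E), (∀ f ∈ Y, Measurable f) →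
      (∀ f ∈ Y, ∀ g : Ω → E, Measurable g → f =ᵐ[μ] g → g ∈ Y) →
      ((∃ T : Ω → Set E, (∀ ω, IsClosed (T ω)) ∧ (∀ ω, (T ω).Nonempty) ∧
          EffrosMeasurable T ∧ Selections μ T = Y) ↔
        (StableFnSet μ Y ∧ SeqClosedFnSet μ Y))) :=
  selections_correspondence_general S hSclosed hSne hSEffros X hXmeas hXstable hXseqclosed

end RandomSetPaper
end

section
/- Let I ⊆ L⁰(ℕ) be a stable set and let (H_i)_{i∈I} be a stable family of stable subsets of L⁰(E), i.e. each H_i is a stable subset of L⁰(E) and H_{Σ_k 1_{A_k} i_k} = {Σ_k 1_{A_k} z_k : z_k ∈ H_{i_k}} for all countable 𝓕-measurable partitions (A_k) of Ω and sequences (i_k) in I. Then there exists a stable family (x_i)_{i∈I} of elements of L⁰(E) — i.e. x_{Σ_k 1_{A_k} i_k} = Σ_k 1_{A_k} x_{i_k} for all such partitions and sequences — with x_i ∈ H_i for every i ∈ I. -/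
/-!
For each `n : ℕ`, stability of `I` lets one realise the essential union of the events
`{i = n}`, `i ∈ I`, by a single index `iₙ ∈ I`: a countable subfamily already covers it,
and concatenating that subfamily gives `iₙ`. Pick `yₙ ∈ H iₙ` and set
`x i := Σₙ 1_{i = n} yₙ`, i.e. `x i ω = y (i ω) ω`. Since `i = iₙ` a.s. on `{i = n}`,
stability of the family `H` gives `x i ∈ H i`; and `x j = x iₖ` wherever `j = iₖ`, which is
the stability of `x`.
-/

open MeasureTheory Filter Topology Set

namespace RandomSetPaper

theorem exists_seq_ae_le_iUnion {α ι : Type*} [MeasurableSpace α] (μ : Measure α)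
    [IsFiniteMeasure μ] [Nonempty ι] (B : ι → Set α) (hB : ∀ i, MeasurableSet (B i)) :
    ∃ s : ℕ → ι, ∀ i, B i ≤ᵐ[μ] ⋃ n, B (s n) := by
  set cover : (ℕ → ι) → Set α := fun s => ⋃ n, B (s n)
  obtain ⟨u, -, hu, hu_mem⟩ :=
    exists_seq_tendsto_sSup (range_nonempty (μ ∘ cover)) (OrderTop.bddAbove _)
  choose s hs using hu_mem
  set t : ℕ → ι := fun n => s n.unpair.1 n.unpair.2
  have ht : cover t = ⋃ k, cover (s k) := iUnion_unpair fun k n => B (s k n)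
  have hmax : ∀ s', μ (cover s') ≤ μ (cover t) := fun s' =>
    (le_sSup (mem_range_self (f := μ ∘ cover) s')).trans <| le_of_tendsto' hu fun k => by
      rw [← hs k, ht]
      exact measure_mono (subset_iUnion (fun k => cover (s k)) k)
  -- `t` attains the supremum of `μ ∘ cover`, so adding any `B i` to it only adds a null set.
  refine ⟨t, fun i => ae_le_set.2 ?_⟩
  have hcons : cover (fun n => Nat.casesOn n i t) = B i ∪ cover t :=
    (union_iUnion_nat_succ _).symm
  calc μ (B i \ cover t) = μ ((B i ∪ cover t) \ cover t) := by rw [union_sdiff_right]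
    _ = μ (B i ∪ cover t) - μ (cover t) :=
      measure_sdiff subset_union_right (MeasurableSet.iUnion fun n => hB (t n)).nullMeasurableSet
        (measure_ne_top _ _)
    _ = 0 := tsub_eq_zero_of_le (hcons ▸ hmax _)

section Concatenation

variable {Ω β : Type*} [MeasurableSpace Ω] {μ : Measure Ω}

/-- The concatenation `Σₖ 1_{N = k} zₖ` of `z` along the fibres of `N`. -/
def concatAlong (N : Ω → ℕ) (z : ℕ → Ω → β) : Ω → β := fun ω => z (N ω) ω

theorem isPartitionAE_fibers {N : Ω → ℕ} (hN : Measurable N) :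
    IsPartitionAE μ (fun k => N ⁻¹' {k}) :=
  ⟨fun k => hN (measurableSet_singleton k),
    fun _ _ hab => measure_mono_null (fun _ h => hab (h.1.symm.trans h.2)) measure_empty,
    measure_mono_null (fun ω hω => hω (mem_iUnion.2 ⟨N ω, rfl⟩)) measure_empty⟩

theorem isConcatAE_concatAlong (N : Ω → ℕ) (z : ℕ → Ω → β) :
    IsConcatAE μ (fun k => N ⁻¹' {k}) z (concatAlong N z) :=
  fun _ => Eventually.of_forall fun ω hω => congrArg (z · ω) hω

variable [MeasurableSpace β]

theorem measurable_concatAlong {N : Ω → ℕ} {z : ℕ → Ω → β} (hN : Measurable N)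
    (hz : ∀ k, Measurable (z k)) : Measurable (concatAlong N z) :=
  (measurable_from_prod_countable_left (f := fun p : Ω × ℕ => z p.2 p.1) hz).comp
    (measurable_id.prodMk hN)

theorem StableFnSet.concatAlong_mem {X : Set (Ω → β)} (hX : StableFnSet μ X)
    {N : Ω → ℕ} (hN : Measurable N) {z : ℕ → Ω → β} (hzX : ∀ k, z k ∈ X)
    (hz : ∀ k, Measurable (z k)) :
    concatAlong N z ∈ X :=
  hX.2 _ (isPartitionAE_fibers hN) z hzX _ (measurable_concatAlong hN hz)
    (isConcatAE_concatAlong N z)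

theorem StableFnSet.exists_ae_max_preimage [IsFiniteMeasure μ] {X : Set (Ω → β)}
    (hX : StableFnSet μ X) (hXm : ∀ x ∈ X, Measurable x) {T : Set β} (hT : MeasurableSet T) :
    ∃ x₀ ∈ X, ∀ x ∈ X, x ⁻¹' T ≤ᵐ[μ] x₀ ⁻¹' T := by
  classical
  have : Nonempty X := hX.1.to_subtype
  obtain ⟨s, hs⟩ := exists_seq_ae_le_iUnion μ (fun x : X => (x : Ω → β) ⁻¹' T)
    fun x => hXm x x.2 hT
  set U := ⋃ n, (s n : Ω → β) ⁻¹' T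
  have hsm : ∀ n, Measurable (s n : Ω → β) := fun n => hXm _ (s n).2
  -- `N ω` is the first `n` with `s n ω ∈ T`, and `0` outside `U`.
  have hcover : ∀ ω, ∃ n, ω ∈ (s n : Ω → β) ⁻¹' T ∪ Uᶜ := fun ω => by
    by_cases hω : ω ∈ U
    · obtain ⟨n, hn⟩ := mem_iUnion.1 hω
      exact ⟨n, Or.inl hn⟩
    · exact ⟨0, Or.inr hω⟩
  have hN : Measurable fun ω => Nat.find (hcover ω) := measurable_find hcover fun n =>
    (hsm n hT).union (MeasurableSet.iUnion fun m => hsm m hT).compl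
  refine ⟨concatAlong (fun ω => Nat.find (hcover ω)) (fun n => s n),
    hX.concatAlong_mem hN (fun n => (s n).2) hsm, fun x hx => ?_⟩
  filter_upwards [hs ⟨x, hx⟩] with ω h hω
  exact (Nat.find_spec (hcover ω)).resolve_right (not_not.2 (h hω))

end Concatenation

theorem stable_choice_general {Ω E : Type*} [MeasurableSpace Ω]
    {μ : Measure Ω} [IsProbabilityMeasure μ]
    [MeasurableSpace E]
    (I : Set (Ω → ℕ)) (hImeas : ∀ i ∈ I, Measurable i) (hIstable : StableFnSet μ I)
    (H : (Ω → ℕ) → Set (Ω → E))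
    (hHmeas : ∀ i ∈ I, ∀ f ∈ H i, Measurable f)
    (hHstable : ∀ i ∈ I, StableFnSet μ (H i))
    -- stability of the family (H i)_{i ∈ I}
    (hHfam : ∀ (A : ℕ → Set Ω), IsPartitionAE μ A → ∀ iseq : ℕ → Ω → ℕ,
      (∀ k, iseq k ∈ I) → ∀ j : Ω → ℕ, Measurable j → IsConcatAE μ A iseq j →
        H j = {f | Measurable f ∧
          ∃ z : ℕ → Ω → E, (∀ k, z k ∈ H (iseq k)) ∧ IsConcatAE μ A z f}) :
    ∃ x : (Ω → ℕ) → Ω → E,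
      (∀ i ∈ I, x i ∈ H i) ∧
      -- (x i)_{i ∈ I} is a stable family
      ∀ (A : ℕ → Set Ω), IsPartitionAE μ A → ∀ iseq : ℕ → Ω → ℕ,
        (∀ k, iseq k ∈ I) → ∀ j : Ω → ℕ, j ∈ I → Measurable j → IsConcatAE μ A iseq j →
          IsConcatAE μ A (fun k => x (iseq k)) (x j) := by
  choose idx hidxI hidx using fun n : ℕ =>
    hIstable.exists_ae_max_preimage hImeas (measurableSet_singleton n)
  choose y hy using fun n => (hHstable (idx n) (hidxI n)).1
  refine ⟨fun i => concatAlong i y, fun i hi => ?_, fun A _ iseq _ j _ _ hj k => ?_⟩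
  · have hi_concat : IsConcatAE μ (fun n => i ⁻¹' {n}) idx i := fun n =>
      (hidx n i hi).mono fun ω h hω => hω.trans (h hω).symm
    rw [hHfam _ (isPartitionAE_fibers (hImeas i hi)) idx hidxI i (hImeas i hi) hi_concat]
    exact ⟨measurable_concatAlong (hImeas i hi) fun n => hHmeas _ (hidxI n) _ (hy n),
      y, hy, isConcatAE_concatAlong i y⟩
  · filter_upwards [hj k] with ω h hω using congrArg (y · ω) (h hω)

/-- **Lemma 5.2 (measurable axiom of choice).** Given a stable set `I ⊆ L⁰(ℕ)` and a
stable family `(H i)_{i ∈ I}` of stable subsets of `L⁰(E)`, there is a stable family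
`(x i)_{i ∈ I}` with `x i ∈ H i` for every `i ∈ I`. Stability of the family `H` (resp.
`x`) means that it maps any concatenation `j = Σₖ 1_{Aₖ} iₖ` of indices to the set of
concatenations `{Σₖ 1_{Aₖ} zₖ : zₖ ∈ H iₖ}` (resp. to the concatenation
`Σₖ 1_{Aₖ} x_{iₖ}`). -/
theorem stable_choice {Ω E : Type*} [MeasurableSpace Ω]
    {μ : Measure Ω} [IsProbabilityMeasure μ]
    [MetricSpace E] [TopologicalSpace.SeparableSpace E] [CompleteSpace E]
    [MeasurableSpace E] [BorelSpace E]
    (I : Set (Ω → ℕ)) (hImeas : ∀ i ∈ I, Measurable i) (hIstable : StableFnSet μ I)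
    (H : (Ω → ℕ) → Set (Ω → E))
    (hHmeas : ∀ i ∈ I, ∀ f ∈ H i, Measurable f)
    (hHstable : ∀ i ∈ I, StableFnSet μ (H i))
    -- stability of the family (H i)_{i ∈ I}
    (hHfam : ∀ (A : ℕ → Set Ω), IsPartitionAE μ A → ∀ iseq : ℕ → Ω → ℕ,
      (∀ k, iseq k ∈ I) → ∀ j : Ω → ℕ, Measurable j → IsConcatAE μ A iseq j →
        H j = {f | Measurable f ∧
          ∃ z : ℕ → Ω → E, (∀ k, z k ∈ H (iseq k)) ∧ IsConcatAE μ A z f}) :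
    ∃ x : (Ω → ℕ) → Ω → E,
      (∀ i ∈ I, x i ∈ H i) ∧
      -- (x i)_{i ∈ I} is a stable family
      ∀ (A : ℕ → Set Ω), IsPartitionAE μ A → ∀ iseq : ℕ → Ω → ℕ,
        (∀ k, iseq k ∈ I) → ∀ j : Ω → ℕ, j ∈ I → Measurable j → IsConcatAE μ A iseq j →
          IsConcatAE μ A (fun k => x (iseq k)) (x j) :=
  stable_choice_general I hImeas hIstable H hHmeas hHstable hHfam

end RandomSetPaper
end

section
/- If (X,d) is a 𝓖-conditional metric space, then the metric d : X × X → L⁰₊(𝓖) is 𝓖-stable: for all sequences (x_k) and (y_k) in X and every (A_k) ∈ Π_𝓖, d(Σ_k 1_{A_k}x_k, Σ_k 1_{A_k}y_k) = Σ_k 1_{A_k} d(x_k,y_k) a.s. -/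
open MeasureTheory Filter Topology Set

namespace CondPaper

/-- **Remark 2.3.1.** The conditional metric of a `𝓖`-conditional metric space is
`𝓖`-stable: `d(Σₖ 1_{Aₖ} xₖ, Σₖ 1_{Aₖ} yₖ) = Σₖ 1_{Aₖ} d(xₖ, yₖ)` a.s., i.e. the
distance of the two concatenations coincides a.e. on each `A k` with `d (x k) (y k)`. -/
theorem stable_condMetric {Ω : Type*} {m : MeasurableSpace Ω} {μ : Measure Ω}
    [IsProbabilityMeasure μ] {G : MeasurableSpace Ω} (hG : G ≤ m) {X : Type*}
    (D : CondMetric μ G X) (A : ℕ → Set Ω) (hA : IsCondPartition μ G A)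
    (x y : ℕ → X) :
    ∀ k, ∀ᵐ ω ∂μ, ω ∈ A k →
      D.d (D.concat A hA x) (D.concat A hA y) ω = D.d (x k) (y k) ω := by
  intro k
  have hx : ∀ᵐ ω ∂μ, ω ∈ A k → D.d (D.concat A hA x) (x k) ω = 0 :=
    (D.concat_spec A hA x).choose_spec.1 k
  have hy : ∀ᵐ ω ∂μ, ω ∈ A k → D.d (D.concat A hA y) (y k) ω = 0 :=
    (D.concat_spec A hA y).choose_spec.1 k
  set cx := D.concat A hA x
  set cy := D.concat A hA y
  filter_upwards [hx, hy, D.triangle cx (x k) cy, D.triangle (x k) (y k) cy,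
    D.triangle (x k) cx (y k), D.triangle cx cy (y k), D.symm (y k) cy,
    D.symm (x k) cx, D.symm cy (y k)] with ω h1 h2 t1 t2 t3 t4 s1 s2 s3 hk
  have e1 := h1 hk
  have e2 := h2 hk
  have syk : D.d (y k) cy ω = 0 := by rw [s1]; exact e2
  have sxk : D.d (x k) cx ω = 0 := by rw [s2]; exact e1
  have scy : D.d cy (y k) ω = 0 := e2
  linarith

end CondPaper
end
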